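/- Let G act transitively on a set X and let f : P_fin(X) → ℝ be a G-invariant submodular function attaining its infimum on nonempty finite subsets. Then every element of X belongs to exactly one atom of f, and the atoms form a partition of X into blocks permuted by the G-action (g · Y₀ is an atom for every atom Y₀ and g ∈ G). -/

import Mathlib

/-!
Submodularity makes the intersection of two minimizers a minimizer whenever it is nonempty,
so two atoms that meet contain their intersection as an atom of the same, minimal, size and
therefore coincide. Invariance of `f` lets `G` map atoms to atoms, and transitivity moves one
atom through any given point.
-/

open Pointwise

def IsAtomFor {S : Type*} (f : Finset S → ℝ) (m : ℝ) (A : Finset S) : Prop :=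
  A.Nonempty ∧ f A = m ∧ ∀ B : Finset S, B.Nonempty → f B = m → A.card ≤ B.card

section Atoms

variable {S : Type*} {f : Finset S → ℝ} {m : ℝ}

theorem exists_isAtomFor (hatt : ∃ Y : Finset S, Y.Nonempty ∧ f Y = m) :
    ∃ A : Finset S, IsAtomFor f m A := by
  obtain ⟨A, ⟨hAne, hAf⟩, hAmin⟩ :=
    (InvImage.wf Finset.card wellFounded_lt).has_min {Y | Y.Nonempty ∧ f Y = m} hatt
  exact ⟨A, hAne, hAf, fun B hBne hBf => not_lt.1 (hAmin B ⟨hBne, hBf⟩)⟩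

variable [DecidableEq S]

theorem IsAtomFor.smul {G : Type*} [Group G] [MulAction G S]
    (hinv : ∀ (g : G) (Y : Finset S), f (g • Y) = f Y) {A : Finset S}
    (hA : IsAtomFor f m A) (g : G) : IsAtomFor f m (g • A) := by
  refine ⟨hA.1.smul_finset, by rw [hinv, hA.2.1], fun B hBne hBf => ?_⟩
  rw [Finset.card_smul_finset]
  exact hA.2.2 B hBne hBf

variable (hsub : ∀ Y Z : Finset S, f (Y ∩ Z) + f (Y ∪ Z) ≤ f Y + f Z)
  (hmin : ∀ Y : Finset S, Y.Nonempty → m ≤ f Y)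
include hsub hmin

theorem apply_inter_eq_of_apply_eq {A B : Finset S} (hA : A.Nonempty) (hAf : f A = m)
    (hBf : f B = m) (hAB : (A ∩ B).Nonempty) : f (A ∩ B) = m := by
  have hinter := hmin _ hAB
  have hunion := hmin (A ∪ B) (hA.mono Finset.subset_union_left)
  linarith [hsub A B]

theorem IsAtomFor.eq_of_inter_nonempty {A B : Finset S} (hA : IsAtomFor f m A)
    (hB : IsAtomFor f m B) (hAB : (A ∩ B).Nonempty) : A = B := by
  have hf := apply_inter_eq_of_apply_eq hsub hmin hA.1 hA.2.1 hB.2.1 hAB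
  calc A = A ∩ B := (Finset.eq_of_subset_of_card_le Finset.inter_subset_left
          (hA.2.2 _ hAB hf)).symm
    _ = B := Finset.eq_of_subset_of_card_le Finset.inter_subset_right (hB.2.2 _ hAB hf)

end Atoms

/-- If `G` acts transitively on `X` and `f` is a `G`-invariant submodular function on
finite subsets of `X` attaining its minimum, then every element of `X` lies in exactly
one atom and `G` permutes the atoms. -/
theorem stmt_9 {G X : Type*} [Group G] [MulAction G X] [MulAction.IsPretransitive G X]
    [DecidableEq X]
    (f : Finset X → ℝ) (m : ℝ)
    (hsub : ∀ Y Z : Finset X, f (Y ∩ Z) + f (Y ∪ Z) ≤ f Y + f Z)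
    (hinv : ∀ (g : G) (Y : Finset X), f (g • Y) = f Y)
    (hmin : ∀ Y : Finset X, Y.Nonempty → m ≤ f Y)
    (hatt : ∃ Y : Finset X, Y.Nonempty ∧ f Y = m) :
    (∀ x : X, ∃! Y₀ : Finset X, IsAtomFor f m Y₀ ∧ x ∈ Y₀) ∧
    (∀ (g : G) (Y₀ : Finset X), IsAtomFor f m Y₀ → IsAtomFor f m (g • Y₀)) := by
  refine ⟨fun x => ?_, fun g Y₀ hY₀ => hY₀.smul hinv g⟩
  obtain ⟨A, hA⟩ := exists_isAtomFor hatt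
  obtain ⟨a, ha⟩ := hA.1
  obtain ⟨g, rfl⟩ := MulAction.exists_smul_eq G a x
  have hgA : g • a ∈ g • A := Finset.smul_mem_smul_finset ha
  refine ⟨g • A, ⟨hA.smul hinv g, hgA⟩, fun B ⟨hB, hxB⟩ => ?_⟩
  exact hB.eq_of_inter_nonempty hsub hmin (hA.smul hinv g)
    ⟨g • a, Finset.mem_inter.2 ⟨hxB, hgA⟩⟩
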